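/- arXiv:2604.07240 — 2 statements merged into one kernel-verified Lean document; each statement's English description precedes it below -/
import Mathlib

section
/- Suppose all pairwise distances d(x, y) between points of M are integers, and let w_0 : C → ℝ be an integer-valued 1-Lipschitz function. Then the set of normalized work functions reachable from w_0 is finite. -/
open scoped BigOperators

/-- A configuration: a multiset of `k` points of `M`. -/
abbrev Conf (M : Type*) (k : ℕ) := Sym M k

/-- Minimum matching cost between two configurations: the minimum over enumerations
of the two multisets of the sum of pointwise distances. -/
noncomputable def confDist {M : Type*} [MetricSpace M] {k : ℕ} (X Y : Conf M k) : ℝ :=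
  sInf { c : ℝ | ∃ u v : Fin k → M,
    ((List.ofFn u : List M) : Multiset M) = (X : Multiset M) ∧
    ((List.ofFn v : List M) : Multiset M) = (Y : Multiset M) ∧
    c = ∑ i, dist (u i) (v i) }

/-- The work-function update operator `T_r`. -/
noncomputable def wfUpdate {M : Type*} [MetricSpace M] {k : ℕ}
    (w : Conf M k → ℝ) (r : M) (X : Conf M k) : ℝ :=
  sInf { c : ℝ | ∃ Y : Conf M k, r ∈ Y ∧ c = w Y + confDist X Y }

/-- The extended cost `∇(w, r)`. -/
noncomputable def extCost {M : Type*} [MetricSpace M] {k : ℕ}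
    (w : Conf M k → ℝ) (r : M) : ℝ :=
  sSup { c : ℝ | ∃ X : Conf M k, c = wfUpdate w r X - w X }

/-- The OPT increase `ΔOPT(w, r)`. -/
noncomputable def optIncrease {M : Type*} [MetricSpace M] {k : ℕ}
    (w : Conf M k → ℝ) (r : M) : ℝ :=
  sInf (Set.range (wfUpdate w r)) - sInf (Set.range w)

/-- The normalized work function `ŵ = w - (min w)·1`. -/
noncomputable def normWF {M : Type*} [MetricSpace M] {k : ℕ}
    (w : Conf M k → ℝ) : Conf M k → ℝ :=
  fun X => w X - sInf (Set.range w)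

/-- `w` is 1-Lipschitz with respect to the matching distance on configurations. -/
def LipschitzWF {M : Type*} [MetricSpace M] {k : ℕ} (w : Conf M k → ℝ) : Prop :=
  ∀ X Y : Conf M k, |w X - w Y| ≤ confDist X Y

section Aux
variable {M : Type*} [MetricSpace M] {k : ℕ}

/-- The defining set of `confDist`. -/
def confSet (X Y : Conf M k) : Set ℝ :=
  { c : ℝ | ∃ u v : Fin k → M,
    ((List.ofFn u : List M) : Multiset M) = (X : Multiset M) ∧
    ((List.ofFn v : List M) : Multiset M) = (Y : Multiset M) ∧
    c = ∑ i, dist (u i) (v i) }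

lemma confDist_def (X Y : Conf M k) : confDist X Y = sInf (confSet X Y) := rfl

lemma exists_enum (X : Conf M k) :
    ∃ u : Fin k → M, ((List.ofFn u : List M) : Multiset M) = (X : Multiset M) := by
  set l := (X : Multiset M).toList with hl
  have hlen : l.length = k := by simp [hl, X.prop]
  refine ⟨fun i => l.get (Fin.cast hlen.symm i), ?_⟩
  have h2 : List.ofFn (fun i : Fin k => l.get (Fin.cast hlen.symm i)) = l := by
    apply List.ext_getElem
    · simp [hlen]
    · intro i h1 h2
      simp
  rw [h2, hl, Multiset.coe_toList]

lemma confSet_nonempty (X Y : Conf M k) : (confSet X Y).Nonempty := by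
  obtain ⟨u, hu⟩ := exists_enum X
  obtain ⟨v, hv⟩ := exists_enum Y
  exact ⟨_, u, v, hu, hv, rfl⟩

lemma confSet_finite [Finite M] (X Y : Conf M k) : (confSet X Y).Finite := by
  apply Set.Finite.subset (Set.finite_range
    (fun p : (Fin k → M) × (Fin k → M) => ∑ i, dist (p.1 i) (p.2 i)))
  rintro c ⟨u, v, -, -, rfl⟩
  exact ⟨(u, v), rfl⟩

lemma confDist_mem [Finite M] (X Y : Conf M k) : confDist X Y ∈ confSet X Y :=
  (confSet_nonempty X Y).csInf_mem (confSet_finite X Y)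

lemma confDist_nonneg (X Y : Conf M k) : 0 ≤ confDist X Y := by
  rw [confDist_def]
  refine le_csInf (confSet_nonempty X Y) ?_
  rintro c ⟨u, v, -, -, rfl⟩
  exact Finset.sum_nonneg fun i _ => dist_nonneg

lemma confDist_le [Finite M] {X Y : Conf M k} {u v : Fin k → M}
    (hu : ((List.ofFn u : List M) : Multiset M) = (X : Multiset M))
    (hv : ((List.ofFn v : List M) : Multiset M) = (Y : Multiset M)) :
    confDist X Y ≤ ∑ i, dist (u i) (v i) := by
  rw [confDist_def]
  exact csInf_le (confSet_finite X Y).bddBelow ⟨u, v, hu, hv, rfl⟩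

lemma confDist_self [Finite M] (X : Conf M k) : confDist X X = 0 := by
  obtain ⟨u, hu⟩ := exists_enum X
  refine le_antisymm ?_ (confDist_nonneg X X)
  have := confDist_le hu hu
  simpa using this

lemma confDist_int [Finite M] (hd : ∀ x y : M, ∃ n : ℤ, dist x y = (n : ℝ))
    (X Y : Conf M k) : ∃ n : ℤ, confDist X Y = (n : ℝ) := by
  obtain ⟨u, v, -, -, hc⟩ := confDist_mem X Y
  choose f hf using fun i => hd (u i) (v i)
  refine ⟨∑ i, f i, ?_⟩
  rw [hc]
  push_cast
  exact Finset.sum_congr rfl fun i _ => hf i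

lemma confDist_le_bound [Finite M] {D : ℝ} (hD : ∀ x y : M, dist x y ≤ D)
    (X Y : Conf M k) : confDist X Y ≤ k * D := by
  obtain ⟨u, hu⟩ := exists_enum X
  obtain ⟨v, hv⟩ := exists_enum Y
  calc confDist X Y ≤ ∑ i, dist (u i) (v i) := confDist_le hu hv
    _ ≤ ∑ _i : Fin k, D := Finset.sum_le_sum fun i _ => hD _ _
    _ = k * D := by simp [mul_comm]

/-- The defining set of `wfUpdate`. -/
def updSet (w : Conf M k → ℝ) (r : M) (X : Conf M k) : Set ℝ :=
  { c : ℝ | ∃ Y : Conf M k, r ∈ Y ∧ c = w Y + confDist X Y }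

lemma wfUpdate_def (w : Conf M k → ℝ) (r : M) (X : Conf M k) :
    wfUpdate w r X = sInf (updSet w r X) := rfl

lemma updSet_nonempty (hk : 0 < k) (w : Conf M k → ℝ) (r : M) (X : Conf M k) :
    (updSet w r X).Nonempty :=
  ⟨_, Sym.replicate k r, (Sym.mem_replicate).2 ⟨hk.ne', rfl⟩, rfl⟩

lemma updSet_finite [Fintype M] (w : Conf M k → ℝ) (r : M) (X : Conf M k) :
    (updSet w r X).Finite := by
  classical
  apply Set.Finite.subset (Set.finite_range (fun Y : Conf M k => w Y + confDist X Y))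
  rintro c ⟨Y, -, rfl⟩
  exact ⟨Y, rfl⟩

lemma wfUpdate_mem [Fintype M] (hk : 0 < k) (w : Conf M k → ℝ) (r : M) (X : Conf M k) :
    wfUpdate w r X ∈ updSet w r X :=
  (updSet_nonempty hk w r X).csInf_mem (updSet_finite w r X)

lemma wfUpdate_le [Fintype M] (w : Conf M k → ℝ) (r : M) {X Y : Conf M k} (hY : r ∈ Y) :
    wfUpdate w r X ≤ w Y + confDist X Y :=
  csInf_le (updSet_finite w r X).bddBelow ⟨Y, hY, rfl⟩

end Aux

section Main
variable {M : Type*} [Fintype M] [MetricSpace M] {k : ℕ}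

/-- The minimum of the updated work function is the minimum of `w` over
configurations containing `r`, and the update is sandwiched. -/
lemma wfUpdate_sandwich (hk : 0 < k) (w : Conf M k → ℝ) (r : M) :
    ∃ Y₀ : Conf M k, r ∈ Y₀ ∧ sInf (Set.range (wfUpdate w r)) = w Y₀ ∧
      ∀ X, w Y₀ ≤ wfUpdate w r X ∧ wfUpdate w r X ≤ w Y₀ + confDist X Y₀ := by
  classical
  haveI : Nonempty (Conf M k) := ⟨Sym.replicate k r⟩
  have hne : (Finset.univ.filter (fun Y : Conf M k => r ∈ Y)).Nonempty :=
    ⟨Sym.replicate k r, by simp [Sym.mem_replicate, hk.ne']⟩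
  obtain ⟨Y₀, hY₀mem, hY₀min⟩ := Finset.exists_min_image _ w hne
  have hrY₀ : r ∈ Y₀ := (Finset.mem_filter.1 hY₀mem).2
  have hlow : ∀ X, w Y₀ ≤ wfUpdate w r X := by
    intro X
    rw [wfUpdate_def]
    refine le_csInf (updSet_nonempty hk w r X) ?_
    rintro c ⟨Y, hY, rfl⟩
    have h1 : w Y₀ ≤ w Y := hY₀min Y (Finset.mem_filter.2 ⟨Finset.mem_univ _, hY⟩)
    have h2 := confDist_nonneg X Y
    linarith
  have hup : ∀ X, wfUpdate w r X ≤ w Y₀ + confDist X Y₀ := fun X => wfUpdate_le w r hrY₀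
  refine ⟨Y₀, hrY₀, le_antisymm ?_ ?_, fun X => ⟨hlow X, hup X⟩⟩
  · refine le_trans (csInf_le (Set.finite_range _).bddBelow ⟨Y₀, rfl⟩) ?_
    have := hup Y₀
    rwa [confDist_self, add_zero] at this
  · exact le_csInf (Set.range_nonempty _) (by rintro c ⟨X, rfl⟩; exact hlow X)

lemma foldl_int (hk : 0 < k) (hd : ∀ x y : M, ∃ n : ℤ, dist x y = (n : ℝ))
    (l : List M) (w : Conf M k → ℝ) (hw : ∀ X, ∃ n : ℤ, w X = (n : ℝ)) :
    ∀ X, ∃ n : ℤ, (l.foldl (fun w r => wfUpdate w r) w) X = (n : ℝ) := by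
  induction l generalizing w with
  | nil => exact hw
  | cons r l ih =>
    refine ih _ (fun X => ?_)
    obtain ⟨Y, -, hY⟩ := wfUpdate_mem hk w r X
    obtain ⟨n, hn⟩ := hw Y
    obtain ⟨m, hm⟩ := confDist_int hd X Y
    refine ⟨n + m, ?_⟩
    show wfUpdate w r X = _
    rw [hY, hn, hm]
    push_cast
    ring

end Main

/-- If all pairwise distances are integers and `w₀` is an integer-valued
1-Lipschitz function, then the set of normalized work functions reachable from `w₀`
(by applying the update operator along a finite request sequence and normalizing)
is finite. -/
theorem reachable_normWF_finite {M : Type*} [Fintype M] [MetricSpace M]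
    {k : ℕ} (hk : 0 < k)
    (hd : ∀ x y : M, ∃ n : ℤ, dist x y = (n : ℝ))
    (w₀ : Conf M k → ℝ) (hw₀ : ∀ X : Conf M k, ∃ n : ℤ, w₀ X = (n : ℝ))
    (hlip : LipschitzWF w₀) :
    Set.Finite { v : Conf M k → ℝ |
      ∃ l : List M, v = normWF (l.foldl (fun w r => wfUpdate w r) w₀) } := by
  classical
  by_cases hne : Nonempty M
  case neg =>
    have hE : IsEmpty (Conf M k) := by
      constructor
      intro X
      obtain ⟨u, -⟩ := exists_enum X
      exact hne ⟨u ⟨0, hk⟩⟩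
    haveI : Finite (Conf M k → ℝ) := Finite.of_subsingleton
    exact Set.toFinite _
  haveI := hne
  haveI : Nonempty (Conf M k) := ⟨Sym.replicate k (Classical.arbitrary M)⟩
  obtain ⟨D, hD⟩ : ∃ D : ℝ, ∀ p : M × M, dist p.1 p.2 ≤ D := Finite.exists_le _
  have hD' : ∀ x y : M, dist x y ≤ D := fun x y => hD (x, y)
  set N : ℤ := ⌈(k : ℝ) * D⌉ with hN
  -- every reachable normalized work function is integer-valued with values in [0, N]
  have key : ∀ v ∈ { v : Conf M k → ℝ |
      ∃ l : List M, v = normWF (l.foldl (fun w r => wfUpdate w r) w₀) },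
      ∀ X, ∃ n : ℤ, v X = (n : ℝ) ∧ 0 ≤ v X ∧ v X ≤ (N : ℝ) := by
    rintro v ⟨l, rfl⟩ X
    set w := l.foldl (fun w r => wfUpdate w r) w₀ with hw
    -- integer-valuedness of w
    have hwint : ∀ X, ∃ n : ℤ, w X = (n : ℝ) := foldl_int hk hd l w₀ hw₀
    -- sInf (range w) is attained
    have hmem : sInf (Set.range w) ∈ Set.range w :=
      (Set.range_nonempty w).csInf_mem (Set.finite_range w)
    obtain ⟨X₀, hX₀⟩ := hmem
    have hnonneg : 0 ≤ normWF w X := by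
      have : sInf (Set.range w) ≤ w X := csInf_le (Set.finite_range w).bddBelow ⟨X, rfl⟩
      simpa [normWF] using this
    have hint : ∃ n : ℤ, normWF w X = (n : ℝ) := by
      obtain ⟨n, hn⟩ := hwint X
      obtain ⟨m, hm⟩ := hwint X₀
      exact ⟨n - m, by simp [normWF, ← hX₀, hn, hm]⟩
    have hbound : normWF w X ≤ (k : ℝ) * D := by
      rcases List.eq_nil_or_concat l with rfl | ⟨L, r, rfl⟩
      · -- empty list: use the Lipschitz property of w₀
        have h1 : w X - w X₀ ≤ confDist X X₀ :=
          le_trans (le_abs_self _) (hlip X X₀)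
        have h2 : confDist X X₀ ≤ (k : ℝ) * D := confDist_le_bound hD' X X₀
        simp only [normWF, ← hX₀]
        linarith
      · -- non-empty list ending in request r
        simp only [hw, List.concat_eq_append, List.foldl_append, List.foldl_cons, List.foldl_nil]
        set w' := L.foldl (fun w r => wfUpdate w r) w₀ with hw'
        obtain ⟨Y₀, hrY₀, hminEq, hsand⟩ := wfUpdate_sandwich hk w' r
        obtain ⟨hl1, hl2⟩ := hsand X
        have h3 : confDist X Y₀ ≤ (k : ℝ) * D := confDist_le_bound hD' X Y₀
        simp only [normWF, hminEq]
        linarith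
    obtain ⟨n, hn⟩ := hint
    exact ⟨n, hn, hnonneg, le_trans hbound (by rw [hN]; exact Int.le_ceil _)⟩
  -- the set of such functions is finite
  apply Set.Finite.subset (Set.finite_range
    (fun g : Conf M k → (Finset.Icc (0 : ℤ) N) => fun X => ((g X : ℤ) : ℝ)))
  intro v hv
  choose f hf1 hf2 hf3 using key v hv
  refine ⟨fun X => ⟨f X, Finset.mem_Icc.2 ⟨?_, ?_⟩⟩, ?_⟩
  · exact_mod_cast (hf1 X) ▸ hf2 X
  · exact_mod_cast (hf1 X) ▸ hf3 X
  · funext X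
    exact (hf1 X).symm
end

section
/- Suppose all pairwise distances d(x, y) between points of M are integers and let c ≥ 0. Suppose there is a function Ψ assigning a real number to every normalized work function reachable from some initial work function of the form w_0(X) = d(X_0, X) with X_0 ∈ C, such that for every such reachable normalized work function v and every request r ∈ M, Ψ(normalization of T_r(v)) − Ψ(v) ≥ ∇(v, r) − (c + 1)·ΔOPT(v, r). Then the Work Function Algorithm is c-competitive on (M, d): there exists a constant B such that for every initial configuration X_0 ∈ C, every request sequence ρ, and every WFA trajectory for ρ, WFA(ρ) ≤ c·OPT(ρ) + B. -/
open scoped BigOperators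

/-- The initial work function `w₀(X) = d(X₀, X)` for initial configuration `X₀`. -/
noncomputable def initWF {M : Type*} [MetricSpace M] {k : ℕ} (X₀ : Conf M k) :
    Conf M k → ℝ :=
  fun X => confDist X₀ X

/-- The work function `w_i` after serving the first `i` requests of the sequence `ρ`,
starting from `w₀ = d(X₀, ·)`. -/
noncomputable def wfAt {M : Type*} [MetricSpace M] {k : ℕ} (X₀ : Conf M k)
    (ρ : List M) (i : ℕ) : Conf M k → ℝ :=
  (ρ.take i).foldl (fun w r => wfUpdate w r) (initWF X₀)

/-- `Xs` is a trajectory of the Work Function Algorithm for the request sequence `ρ`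
started at `X₀`: `Xs 0 = X₀` and, for each `i < |ρ|`, the configuration `Xs (i+1)`
contains the request `ρ.get i` and minimizes `w_{i+1}(Y) + d(X_i, Y)` over all
configurations `Y` containing the request. -/
def IsWFATrajectory {M : Type*} [MetricSpace M] {k : ℕ} (X₀ : Conf M k) (ρ : List M)
    (Xs : ℕ → Conf M k) : Prop :=
  Xs 0 = X₀ ∧
  ∀ i : Fin ρ.length,
    ρ.get i ∈ Xs (↑i + 1) ∧
    wfAt X₀ ρ (↑i + 1) (Xs (↑i + 1)) + confDist (Xs ↑i) (Xs (↑i + 1)) =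
      sInf { c : ℝ | ∃ Y : Conf M k, ρ.get i ∈ Y ∧
        c = wfAt X₀ ρ (↑i + 1) Y + confDist (Xs ↑i) Y }

/-- The online cost of the trajectory `Xs` on `ρ`: `WFA(ρ) = Σ_{i<t} d(X_i, X_{i+1})`. -/
noncomputable def WFACost {M : Type*} [MetricSpace M] {k : ℕ} (ρ : List M)
    (Xs : ℕ → Conf M k) : ℝ :=
  ∑ i : Fin ρ.length, confDist (Xs ↑i) (Xs (↑i + 1))

/-- The offline optimum `OPT(ρ) = min_X w_t(X)`. -/
noncomputable def OPTCost {M : Type*} [MetricSpace M] {k : ℕ} (X₀ : Conf M k)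
    (ρ : List M) : ℝ :=
  sInf (Set.range (wfAt X₀ ρ ρ.length))

set_option linter.unusedSectionVars false
set_option linter.unusedVariables false
namespace WFAProof

lemma ofFn_get_cast {α : Type*} {n : ℕ} (l : List α) (h : l.length = n) :
    List.ofFn (fun i : Fin n => l.get (Fin.cast h.symm i)) = l := by
  subst h; simp [List.ofFn_get]

lemma exists_enum {M : Type*} {k : ℕ} (X : Conf M k) :
    ∃ u : Fin k → M, ((List.ofFn u : List M) : Multiset M) = (X : Multiset M) := by
  obtain ⟨l, hl⟩ := Quotient.exists_rep (X : Multiset M)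
  have hl' : (l : Multiset M) = (X : Multiset M) := hl
  have hlen : l.length = k := by
    have h2 : Multiset.card (l : Multiset M) = Multiset.card (X : Multiset M) := by rw [hl']
    rw [Multiset.coe_card] at h2
    exact h2.trans X.2
  exact ⟨fun i => l.get (Fin.cast hlen.symm i), by rw [ofFn_get_cast l hlen]; exact hl'⟩

lemma finite_conf {M : Type*} [Fintype M] {k : ℕ} : Finite (Conf M k) := by
  haveI := Classical.decEq M; infer_instance

variable {M : Type*} [Fintype M] [MetricSpace M] {k : ℕ}

/-! ### confDist -/

def cdSet (X Y : Conf M k) : Set ℝ :=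
  { c : ℝ | ∃ u v : Fin k → M,
    ((List.ofFn u : List M) : Multiset M) = (X : Multiset M) ∧
    ((List.ofFn v : List M) : Multiset M) = (Y : Multiset M) ∧
    c = ∑ i, dist (u i) (v i) }

lemma confDist_eq (X Y : Conf M k) : confDist X Y = sInf (cdSet X Y) := rfl

lemma cdSet_finite (X Y : Conf M k) : (cdSet X Y).Finite := by
  apply Set.Finite.subset (Set.finite_range
    (fun p : (Fin k → M) × (Fin k → M) => ∑ i, dist (p.1 i) (p.2 i)))
  rintro c ⟨u, v, -, -, rfl⟩
  exact ⟨(u, v), rfl⟩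

lemma cdSet_nonempty (X Y : Conf M k) : (cdSet X Y).Nonempty := by
  obtain ⟨u, hu⟩ := exists_enum X
  obtain ⟨v, hv⟩ := exists_enum Y
  exact ⟨_, u, v, hu, hv, rfl⟩

lemma cdSet_nonneg {X Y : Conf M k} {c : ℝ} (hc : c ∈ cdSet X Y) : 0 ≤ c := by
  obtain ⟨u, v, -, -, rfl⟩ := hc
  exact Finset.sum_nonneg fun i _ => dist_nonneg

lemma confDist_nonneg (X Y : Conf M k) : 0 ≤ confDist X Y :=
  le_csInf (cdSet_nonempty X Y) fun c hc => cdSet_nonneg hc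

lemma confDist_mem (X Y : Conf M k) : confDist X Y ∈ cdSet X Y :=
  (cdSet_nonempty X Y).csInf_mem (cdSet_finite X Y)

lemma confDist_self (X : Conf M k) : confDist X X = 0 := by
  refine le_antisymm ?_ (confDist_nonneg X X)
  obtain ⟨u, hu⟩ := exists_enum X
  exact csInf_le (cdSet_finite X X).bddBelow ⟨u, u, hu, hu, by simp⟩

lemma confDist_int (hd : ∀ x y : M, ∃ n : ℤ, dist x y = (n : ℝ)) (X Y : Conf M k) :
    ∃ n : ℤ, confDist X Y = (n : ℝ) := by
  obtain ⟨u, v, -, -, h⟩ := confDist_mem X Y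
  refine ⟨∑ i, (hd (u i) (v i)).choose, ?_⟩
  rw [h]
  push_cast
  exact Finset.sum_congr rfl fun i _ => (hd (u i) (v i)).choose_spec

/-! ### wfUpdate -/

def upSet (w : Conf M k → ℝ) (r : M) (X : Conf M k) : Set ℝ :=
  { c : ℝ | ∃ Y : Conf M k, r ∈ Y ∧ c = w Y + confDist X Y }

lemma wfUpdate_eq (w : Conf M k → ℝ) (r : M) (X : Conf M k) :
    wfUpdate w r X = sInf (upSet w r X) := rfl

lemma upSet_finite (w : Conf M k → ℝ) (r : M) (X : Conf M k) : (upSet w r X).Finite := by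
  haveI : Finite (Conf M k) := finite_conf
  apply Set.Finite.subset (Set.finite_range (fun Y : Conf M k => w Y + confDist X Y))
  rintro c ⟨Y, -, rfl⟩
  exact ⟨Y, rfl⟩

lemma upSet_nonempty (hk : k ≠ 0) (w : Conf M k → ℝ) (r : M) (X : Conf M k) :
    (upSet w r X).Nonempty :=
  ⟨_, Sym.replicate k r, Sym.mem_replicate.2 ⟨hk, rfl⟩, rfl⟩

lemma wfUpdate_le (w : Conf M k → ℝ) (r : M) (X : Conf M k) {Y : Conf M k} (hY : r ∈ Y) :
    wfUpdate w r X ≤ w Y + confDist X Y :=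
  csInf_le (upSet_finite w r X).bddBelow ⟨Y, hY, rfl⟩

lemma wfUpdate_mem (hk : k ≠ 0) (w : Conf M k → ℝ) (r : M) (X : Conf M k) :
    wfUpdate w r X ∈ upSet w r X :=
  (upSet_nonempty hk w r X).csInf_mem (upSet_finite w r X)

lemma wfUpdate_le_self (w : Conf M k → ℝ) (r : M) {X : Conf M k} (hX : r ∈ X) :
    wfUpdate w r X ≤ w X := by
  have h := wfUpdate_le w r X hX
  rwa [confDist_self, add_zero] at h

lemma wfUpdate_add_const (hk : k ≠ 0) (w : Conf M k → ℝ) (r : M) (m : ℝ) (X : Conf M k) :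
    wfUpdate (fun Z => w Z + m) r X = wfUpdate w r X + m := by
  refine le_antisymm ?_ ?_
  · obtain ⟨Y, hY, h⟩ := wfUpdate_mem hk w r X
    have h2 : wfUpdate (fun Z => w Z + m) r X ≤ w Y + m + confDist X Y :=
      wfUpdate_le (fun Z => w Z + m) r X hY
    rw [h]
    linarith
  · refine le_csInf (upSet_nonempty hk _ r X) ?_
    rintro b ⟨Y, hY, rfl⟩
    have h2 := wfUpdate_le w r X hY
    show wfUpdate w r X + m ≤ w Y + m + confDist X Y
    linarith

lemma wfUpdate_int (hk : k ≠ 0) (hd : ∀ x y : M, ∃ n : ℤ, dist x y = (n : ℝ))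
    {w : Conf M k → ℝ} (hw : ∀ X, ∃ n : ℤ, w X = (n : ℝ)) (r : M) (X : Conf M k) :
    ∃ n : ℤ, wfUpdate w r X = (n : ℝ) := by
  obtain ⟨Y, -, h⟩ := wfUpdate_mem hk w r X
  obtain ⟨a, ha⟩ := hw Y
  obtain ⟨b, hb⟩ := confDist_int hd X Y
  exact ⟨a + b, by rw [h, ha, hb]; push_cast; ring⟩

/-! ### ranges -/

lemma range_finite (w : Conf M k → ℝ) : (Set.range w).Finite := by
  haveI : Finite (Conf M k) := finite_conf
  exact Set.finite_range w

lemma sInf_range_le (w : Conf M k → ℝ) (X : Conf M k) : sInf (Set.range w) ≤ w X :=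
  csInf_le (range_finite w).bddBelow ⟨X, rfl⟩

lemma sInf_range_mem [Nonempty (Conf M k)] (w : Conf M k → ℝ) :
    sInf (Set.range w) ∈ Set.range w :=
  (Set.range_nonempty w).csInf_mem (range_finite w)

lemma sInf_range_add [Nonempty (Conf M k)] (w : Conf M k → ℝ) (m : ℝ) :
    sInf (Set.range (fun Z => w Z + m)) = sInf (Set.range w) + m := by
  refine le_antisymm ?_ ?_
  · obtain ⟨X, hX⟩ := sInf_range_mem w
    calc sInf (Set.range (fun Z => w Z + m)) ≤ w X + m := sInf_range_le _ X
    _ = sInf (Set.range w) + m := by rw [hX]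
  · refine le_csInf (Set.range_nonempty _) ?_
    rintro b ⟨X, rfl⟩
    have := sInf_range_le w X
    simp only []
    linarith

lemma normWF_add_const [Nonempty (Conf M k)] (w : Conf M k → ℝ) (m : ℝ) :
    normWF (fun Z => w Z + m) = normWF w := by
  funext X
  simp only [normWF, sInf_range_add w m]
  ring

/-! ### extCost and optIncrease under constants -/

def ecSet (w : Conf M k → ℝ) (r : M) : Set ℝ :=
  { c : ℝ | ∃ X : Conf M k, c = wfUpdate w r X - w X }

lemma extCost_eq (w : Conf M k → ℝ) (r : M) : extCost w r = sSup (ecSet w r) := rfl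

lemma ecSet_finite (w : Conf M k → ℝ) (r : M) : (ecSet w r).Finite := by
  haveI : Finite (Conf M k) := finite_conf
  apply Set.Finite.subset (Set.finite_range (fun X : Conf M k => wfUpdate w r X - w X))
  rintro c ⟨X, rfl⟩
  exact ⟨X, rfl⟩

lemma le_extCost (w : Conf M k → ℝ) (r : M) (X : Conf M k) :
    wfUpdate w r X - w X ≤ extCost w r :=
  le_csSup (ecSet_finite w r).bddAbove ⟨X, rfl⟩

lemma extCost_add_const (hk : k ≠ 0) (w : Conf M k → ℝ) (r : M) (m : ℝ) :
    extCost (fun Z => w Z + m) r = extCost w r := by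
  have : ecSet (fun Z => w Z + m) r = ecSet w r := by
    ext b
    constructor
    · rintro ⟨X, rfl⟩
      exact ⟨X, by rw [wfUpdate_add_const hk w r m X]; ring⟩
    · rintro ⟨X, rfl⟩
      exact ⟨X, by rw [wfUpdate_add_const hk w r m X]; ring⟩
  rw [extCost_eq, extCost_eq, this]

lemma optIncrease_add_const (hk : k ≠ 0) (w : Conf M k → ℝ) (r : M) (m : ℝ) :
    optIncrease (fun Z => w Z + m) r = optIncrease w r := by
  haveI : Nonempty (Conf M k) := ⟨Sym.replicate k r⟩
  have h1 : wfUpdate (fun Z => w Z + m) r = fun X => wfUpdate w r X + m :=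
    funext (wfUpdate_add_const hk w r m)
  simp only [optIncrease, h1, sInf_range_add]
  ring

/-! ### min of updated work function -/

def minSet (w : Conf M k → ℝ) (r : M) : Set ℝ :=
  { c : ℝ | ∃ Y : Conf M k, r ∈ Y ∧ c = w Y }

lemma minSet_finite (w : Conf M k → ℝ) (r : M) : (minSet w r).Finite := by
  haveI : Finite (Conf M k) := finite_conf
  apply Set.Finite.subset (Set.finite_range w)
  rintro c ⟨Y, -, rfl⟩
  exact ⟨Y, rfl⟩

lemma minSet_nonempty (hk : k ≠ 0) (w : Conf M k → ℝ) (r : M) : (minSet w r).Nonempty :=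
  ⟨_, Sym.replicate k r, Sym.mem_replicate.2 ⟨hk, rfl⟩, rfl⟩

lemma sInf_range_wfUpdate (hk : k ≠ 0) (w : Conf M k → ℝ) (r : M) :
    sInf (Set.range (wfUpdate w r)) = sInf (minSet w r) := by
  haveI : Nonempty (Conf M k) := ⟨Sym.replicate k r⟩
  refine le_antisymm ?_ ?_
  · refine le_csInf (minSet_nonempty hk w r) ?_
    rintro b ⟨Y, hY, rfl⟩
    exact le_trans (sInf_range_le (wfUpdate w r) Y) (wfUpdate_le_self w r hY)
  · refine le_csInf (Set.range_nonempty _) ?_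
    rintro b ⟨X, rfl⟩
    obtain ⟨Y, hY, h⟩ := wfUpdate_mem hk w r X
    have h1 : sInf (minSet w r) ≤ w Y := csInf_le (minSet_finite w r).bddBelow ⟨Y, hY, rfl⟩
    have h2 := confDist_nonneg X Y
    rw [h]
    linarith

/-- For any `w`, the updated work function exceeds its own minimum by at most
the diameter bound `D`. -/
lemma wfUpdate_le_min_add (hk : k ≠ 0) (w : Conf M k → ℝ) (r : M) (X : Conf M k)
    {D : ℝ} (hD : ∀ A B : Conf M k, confDist A B ≤ D) :
    wfUpdate w r X ≤ sInf (Set.range (wfUpdate w r)) + D := by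
  obtain ⟨Y₀, hY₀, h⟩ := (minSet_nonempty hk w r).csInf_mem (minSet_finite w r)
  calc wfUpdate w r X ≤ w Y₀ + confDist X Y₀ := wfUpdate_le w r X hY₀
  _ ≤ w Y₀ + D := by linarith [hD X Y₀]
  _ = sInf (Set.range (wfUpdate w r)) + D := by rw [sInf_range_wfUpdate hk w r, ← h]

end WFAProof

namespace WFAProof

variable {M : Type*} [Fintype M] [MetricSpace M] {k : ℕ}

lemma wfAt_zero (X₀ : Conf M k) (ρ : List M) : wfAt X₀ ρ 0 = initWF X₀ := rfl

lemma wfAt_succ (X₀ : Conf M k) (ρ : List M) (i : ℕ) (h : i < ρ.length) :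
    wfAt X₀ ρ (i + 1) = wfUpdate (wfAt X₀ ρ i) (ρ.get ⟨i, h⟩) := by
  unfold wfAt
  rw [List.take_succ, List.getElem?_eq_getElem h]
  rw [List.foldl_append]
  simp [List.get_eq_getElem]

lemma foldl_int (hk : k ≠ 0) (hd : ∀ x y : M, ∃ n : ℤ, dist x y = (n : ℝ)) (l : List M) :
    ∀ w : Conf M k → ℝ, (∀ X, ∃ n : ℤ, w X = (n : ℝ)) →
      ∀ X, ∃ n : ℤ, l.foldl (fun u r => wfUpdate u r) w X = (n : ℝ) := by
  induction l with
  | nil => intro w hw; exact hw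
  | cons r l ih => intro w hw; exact ih _ (wfUpdate_int hk hd hw r)

lemma reach_bound (hk : k ≠ 0) {D : ℝ} (hD : ∀ A B : Conf M k, confDist A B ≤ D)
    (X₀ : Conf M k) (l : List M) (X : Conf M k) :
    l.foldl (fun u r => wfUpdate u r) (initWF X₀) X ≤
      sInf (Set.range (l.foldl (fun u r => wfUpdate u r) (initWF X₀))) + D := by
  haveI : Nonempty (Conf M k) := ⟨X₀⟩
  rcases l.eq_nil_or_concat with rfl | ⟨L, b, rfl⟩
  · simp only [List.foldl_nil]
    have h0 : (0 : ℝ) ≤ sInf (Set.range (initWF X₀)) := by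
      refine le_csInf (Set.range_nonempty _) ?_
      rintro x ⟨Y, rfl⟩
      exact confDist_nonneg X₀ Y
    have h1 : initWF X₀ X ≤ D := hD X₀ X
    linarith
  · rw [List.concat_eq_append, List.foldl_append, List.foldl_cons, List.foldl_nil]
    exact wfUpdate_le_min_add hk _ b X hD

lemma reach_norm_mem (hk : k ≠ 0) (hd : ∀ x y : M, ∃ n : ℤ, dist x y = (n : ℝ))
    {D : ℝ} (hD : ∀ A B : Conf M k, confDist A B ≤ D)
    {v : Conf M k → ℝ}
    (hv : ∃ (X₀ : Conf M k) (l : List M),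
      v = normWF (l.foldl (fun u r => wfUpdate u r) (initWF X₀)))
    (X : Conf M k) : (∃ n : ℤ, v X = (n : ℝ)) ∧ 0 ≤ v X ∧ v X ≤ D := by
  obtain ⟨X₀, l, rfl⟩ := hv
  haveI : Nonempty (Conf M k) := ⟨X₀⟩
  set w := l.foldl (fun u r => wfUpdate u r) (initWF X₀) with hw
  have hwint : ∀ Z, ∃ n : ℤ, w Z = (n : ℝ) :=
    foldl_int hk hd l (initWF X₀) (fun Z => confDist_int hd X₀ Z)
  obtain ⟨Y₀, hY₀⟩ := sInf_range_mem w
  have hval : normWF w X = w X - sInf (Set.range w) := rfl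
  refine ⟨?_, ?_, ?_⟩
  · obtain ⟨a, ha⟩ := hwint X
    obtain ⟨b, hb⟩ := hwint Y₀
    exact ⟨a - b, by rw [hval, ha, ← hY₀, hb]; push_cast; ring⟩
  · rw [hval]
    have := sInf_range_le w X
    linarith
  · rw [hval]
    have := reach_bound hk hD X₀ l X
    rw [← hw] at this
    linarith

end WFAProof

namespace WFAProof

variable {M : Type*} [Fintype M] [MetricSpace M] {k : ℕ}

def reachSet (M : Type*) [Fintype M] [MetricSpace M] (k : ℕ) : Set (Conf M k → ℝ) :=
  {v | ∃ (X₀ : Conf M k) (l : List M),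
    v = normWF (l.foldl (fun u r => wfUpdate u r) (initWF X₀))}

end WFAProof

/-- Suppose all pairwise distances are integers, `c ≥ 0`, and `Ψ` assigns
a real number to normalized work functions such that for every normalized work function `v`
reachable from some initial work function `w₀ = d(X₀, ·)` and every request `r`,
`Ψ(normalization of T_r(v)) - Ψ(v) ≥ ∇(v, r) - (c+1)·ΔOPT(v, r)`.
Then the Work Function Algorithm is `c`-competitive on `(M, d)`:
there is a constant `B` with `WFA(ρ) ≤ c·OPT(ρ) + B` for every initial configuration `X₀`,
request sequence `ρ`, and WFA trajectory for `ρ`. -/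
theorem wfa_competitive_of_normalized_potential {M : Type*} [Fintype M] [MetricSpace M]
    {k : ℕ} (hk : 0 < k)
    (hd : ∀ x y : M, ∃ n : ℤ, dist x y = (n : ℝ))
    (c : ℝ) (hc : 0 ≤ c)
    (Ψ : (Conf M k → ℝ) → ℝ)
    (hΨ : ∀ v : Conf M k → ℝ,
      (∃ (X₀ : Conf M k) (l : List M),
        v = normWF (l.foldl (fun u r => wfUpdate u r) (initWF X₀))) →
      ∀ r : M,
        Ψ (normWF (wfUpdate v r)) - Ψ v ≥
          extCost v r - (c + 1) * optIncrease v r) :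
    ∃ B : ℝ, ∀ (X₀ : Conf M k) (ρ : List M) (Xs : ℕ → Conf M k),
      IsWFATrajectory X₀ ρ Xs → WFACost ρ Xs ≤ c * OPTCost X₀ ρ + B := by
  classical
  rcases isEmpty_or_nonempty (Conf M k) with hE | hNE
  · exact ⟨0, fun X₀ => (hE.false X₀).elim⟩
  haveI : Finite (Conf M k) := WFAProof.finite_conf
  have hkne : k ≠ 0 := hk.ne'
  set D := sSup (Set.range (fun p : Conf M k × Conf M k => confDist p.1 p.2)) with hDdef
  have hD : ∀ A B : Conf M k, confDist A B ≤ D := fun A B =>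
    le_csSup (Set.finite_range _).bddAbove ⟨(A, B), rfl⟩
  have hTfin : ({x : ℝ | (∃ n : ℤ, x = (n : ℝ)) ∧ 0 ≤ x ∧ x ≤ D}).Finite := by
    apply Set.Finite.subset ((Set.finite_Icc (0 : ℤ) ⌈D⌉).image (fun n : ℤ => (n : ℝ)))
    rintro x ⟨⟨n, rfl⟩, h0, hxD⟩
    refine ⟨n, ⟨?_, ?_⟩, rfl⟩
    · exact_mod_cast h0
    · have h2 : (n : ℝ) ≤ (⌈D⌉ : ℝ) := hxD.trans (Int.le_ceil D)
      exact_mod_cast h2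
  have hRsub : WFAProof.reachSet M k ⊆ Set.univ.pi (fun _ : Conf M k =>
      {x : ℝ | (∃ n : ℤ, x = (n : ℝ)) ∧ 0 ≤ x ∧ x ≤ D}) := by
    intro v hv X _
    exact WFAProof.reach_norm_mem hkne hd hD hv X
  have hRfin : (WFAProof.reachSet M k).Finite := (Set.Finite.pi (fun _ => hTfin)).subset hRsub
  have hPfin : (Ψ '' WFAProof.reachSet M k).Finite := hRfin.image Ψ
  refine ⟨sSup (Ψ '' WFAProof.reachSet M k) - sInf (Ψ '' WFAProof.reachSet M k), ?_⟩
  intro X₀ ρ Xs hTraj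
  have hmem : ∀ i : ℕ, normWF (wfAt X₀ ρ i) ∈ WFAProof.reachSet M k :=
    fun i => ⟨X₀, ρ.take i, rfl⟩
  have hm0 : sInf (Set.range (wfAt X₀ ρ 0)) = 0 := by
    refine le_antisymm ?_ (le_csInf (Set.range_nonempty _) ?_)
    · have h := WFAProof.sInf_range_le (wfAt X₀ ρ 0) X₀
      simpa [WFAProof.wfAt_zero, initWF, WFAProof.confDist_self] using h
    · rintro x ⟨Y, rfl⟩
      exact WFAProof.confDist_nonneg X₀ Y
  have key : ∀ i : ℕ, i ≤ ρ.length →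
      (∑ j ∈ Finset.range i, confDist (Xs j) (Xs (j + 1))) + wfAt X₀ ρ i (Xs i) ≤
        Ψ (normWF (wfAt X₀ ρ i)) - Ψ (normWF (wfAt X₀ ρ 0)) +
          (c + 1) * sInf (Set.range (wfAt X₀ ρ i)) := by
    intro i
    induction i with
    | zero =>
      intro _
      have hXs0 : wfAt X₀ ρ 0 (Xs 0) = 0 := by
        rw [hTraj.1]
        simp [WFAProof.wfAt_zero, initWF, WFAProof.confDist_self]
      rw [hm0, hXs0]
      simp
    | succ i ih =>
      intro hi1
      have hi : i < ρ.length := hi1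
      have IH := ih (le_of_lt hi)
      set r := ρ.get ⟨i, hi⟩ with hrdef
      have hsucc : wfAt X₀ ρ (i + 1) = wfUpdate (wfAt X₀ ρ i) r := WFAProof.wfAt_succ X₀ ρ i hi
      obtain ⟨hrmem, heq⟩ := hTraj.2 ⟨i, hi⟩
      have heq' : wfAt X₀ ρ (i + 1) (Xs (i + 1)) + confDist (Xs i) (Xs (i + 1)) =
          sInf (WFAProof.upSet (wfAt X₀ ρ (i + 1)) r (Xs i)) := heq
      have hA : sInf (WFAProof.upSet (wfAt X₀ ρ (i + 1)) r (Xs i)) ≤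
          wfUpdate (wfAt X₀ ρ i) r (Xs i) := by
        rw [WFAProof.wfUpdate_eq]
        refine le_csInf (WFAProof.upSet_nonempty hkne _ r (Xs i)) ?_
        rintro b ⟨Y, hY, rfl⟩
        have h1 : sInf (WFAProof.upSet (wfAt X₀ ρ (i + 1)) r (Xs i)) ≤
            wfAt X₀ ρ (i + 1) Y + confDist (Xs i) Y :=
          csInf_le (WFAProof.upSet_finite _ r (Xs i)).bddBelow ⟨Y, hY, rfl⟩
        have h2 : wfAt X₀ ρ (i + 1) Y ≤ wfAt X₀ ρ i Y := by
          rw [hsucc]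
          exact WFAProof.wfUpdate_le_self _ r hY
        linarith
      have hext : wfUpdate (wfAt X₀ ρ i) r (Xs i) - wfAt X₀ ρ i (Xs i) ≤
          extCost (wfAt X₀ ρ i) r := WFAProof.le_extCost _ r (Xs i)
      set w := wfAt X₀ ρ i with hwdef
      set m := sInf (Set.range w) with hm
      set v := normWF w with hv
      have hwv : w = fun Z => v Z + m := by
        funext Z
        simp only [hv, hm, normWF]
        ring
      have hΨstep := hΨ v ⟨X₀, ρ.take i, by rw [hv, hwdef]; rfl⟩ r
      have hec : extCost v r = extCost w r := by
        conv_rhs => rw [hwv]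
        rw [WFAProof.extCost_add_const hkne v r m]
      have hoi : optIncrease v r = sInf (Set.range (wfAt X₀ ρ (i + 1))) - m := by
        have h1 : optIncrease v r = optIncrease w r := by
          conv_rhs => rw [hwv]
          rw [WFAProof.optIncrease_add_const hkne v r m]
        rw [h1]
        show sInf (Set.range (wfUpdate w r)) - sInf (Set.range w) =
          sInf (Set.range (wfAt X₀ ρ (i + 1))) - m
        rw [← hsucc, ← hm]
      have hnorm : normWF (wfUpdate v r) = normWF (wfAt X₀ ρ (i + 1)) := by
        haveI : Nonempty (Conf M k) := hNE
        rw [hsucc]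
        conv_rhs => rw [hwv]
        rw [funext (WFAProof.wfUpdate_add_const hkne v r m)]
        rw [WFAProof.normWF_add_const]
      rw [hnorm] at hΨstep
      rw [hec, hoi] at hΨstep
      rw [Finset.sum_range_succ]
      linarith [heq', hA, hext, IH, hΨstep]
  have hfin := key ρ.length le_rfl
  have hWFA : WFACost ρ Xs = ∑ j ∈ Finset.range ρ.length, confDist (Xs j) (Xs (j + 1)) :=
    Fin.sum_univ_eq_sum_range (fun j => confDist (Xs j) (Xs (j + 1))) ρ.length
  have hXt : sInf (Set.range (wfAt X₀ ρ ρ.length)) ≤ wfAt X₀ ρ ρ.length (Xs ρ.length) :=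
    WFAProof.sInf_range_le _ _
  have hup : Ψ (normWF (wfAt X₀ ρ ρ.length)) ≤ sSup (Ψ '' WFAProof.reachSet M k) :=
    le_csSup hPfin.bddAbove ⟨_, hmem ρ.length, rfl⟩
  have hlo : sInf (Ψ '' WFAProof.reachSet M k) ≤ Ψ (normWF (wfAt X₀ ρ 0)) :=
    csInf_le hPfin.bddBelow ⟨_, hmem 0, rfl⟩
  have hOPT : OPTCost X₀ ρ = sInf (Set.range (wfAt X₀ ρ ρ.length)) := rfl
  rw [hWFA, hOPT]
  linarith [hfin]
end
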